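/- Let d ≥ 2 be an even integer, let e ≥ 1 be a divisor of d, set ε = d/e, and let s ≥ t ≥ 0 be integers with s ≥ 1 and s + t = e. Define u_j = q^{ε(s−j)} for 1 ≤ j ≤ s and u_{s+j} = −q^{d/2 − εj} for 1 ≤ j ≤ t (all exponents are nonnegative integers), and for 1 ≤ m ≤ e set V_m = q^{c_m} · ∏_{1≤j≤e, j≠m}(u_m − u_j), where c_m = ε(s−m) for m ≤ s and c_m = d/2 − ε(m−s) for m > s. Then π_{1/d}(V_1) − π_{1/d}(V_m) = m − 1 for all 1 ≤ m ≤ s, and π_{1/d}(V_1) − π_{1/d}(V_{s+m}) = s − t − 1 + m for all 1 ≤ m ≤ t. -/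

import Mathlib

open Polynomial

/-- `argCount t f` is the cardinality of the multiset `Arg_t(f)` of real numbers `λ` with
`0 < λ ≤ 2πt` such that `e^{iλ}` is a (complex) root of the real polynomial `f`, each such `λ`
counted with the multiplicity of `e^{iλ}` as a root of `f`. -/
noncomputable def argCount (t : ℝ) (f : Polynomial ℝ) : ℕ :=
  ((f.map (algebraMap ℝ ℂ)).roots.map fun ξ =>
    Nat.card {l : ℝ // 0 < l ∧ l ≤ 2 * Real.pi * t ∧ Complex.exp ((l : ℂ) * Complex.I) = ξ}).sum

/-- `piFn κ d f` is the rational number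
`π_{κ/d}(f) = (a(f) + A(f))·(κ/d) + |Arg_{κ/d}(f)| + (1/2)·(multiplicity of 1 as a root of f)`,
where `a(f)` is the multiplicity of `0` as a root of `f` and `A(f)` is the degree of `f`. -/
noncomputable def piFn (κ d : ℕ) (f : Polynomial ℝ) : ℚ :=
  ((rootMultiplicity 0 f : ℚ) + (f.natDegree : ℚ)) * (κ : ℚ) / (d : ℚ)
    + (argCount ((κ : ℝ) / (d : ℝ)) f : ℚ) + (rootMultiplicity 1 f : ℚ) / 2

/-!
`π_{κ/d}` is additive on products of nonzero polynomials, vanishes on constants and equals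
`2nκ/d` on `q^n`. Every factor `u_m − u_j` is `±q^b (q^k ∓ 1)`, and the roots of `q^k − 1`
(`k < d`) and of `q^k + 1` (`2k < d`) are roots of unity of order less than `d`, so none of them
lies on the arc `0 < λ ≤ 2π/d`; only the simple root `1` of `q^k − 1` contributes. Hence
`π(u_m − u_j) = (c_m + c_j)/d`, plus `1/2` when `u_m` and `u_j` have the same sign, and
`π(V_m) = (e·c_m + ∑ⱼ c_j)/d + (#{j on the side of m} − 1)/2`. The differences then follow
from `2c_m = 2ε(s − m) + [m > s]·d` and `d = εe`.
-/

open Finset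

lemma exp_mul_I_pow_ne_one {k : ℕ} {l : ℝ} (hk : k ≠ 0) (hl : 0 < l)
    (hkl : k * l < 2 * Real.pi) : Complex.exp (l * Complex.I) ^ k ≠ 1 := by
  rw [← Complex.exp_nat_mul, ← mul_assoc, ← Complex.ofReal_natCast, ← Complex.ofReal_mul, Ne,
    Complex.exp_eq_one_iff_of_im_nonneg (by simp; positivity)]
  rintro ⟨n, hn⟩
  have hkl' : (k * l : ℝ) = n * (2 * Real.pi) := by simpa using congrArg Complex.im hn
  have hk' : (0 : ℝ) < k := by exact_mod_cast Nat.pos_of_ne_zero hk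
  have hn : (0 : ℝ) < n ∧ (n : ℝ) < 1 :=
    ⟨by nlinarith [Real.pi_pos, mul_pos hk' hl], by nlinarith [Real.pi_pos]⟩
  norm_cast at hn
  omega

lemma argCount_eq_zero {t : ℝ} {f : Polynomial ℝ}
    (h : ∀ ξ ∈ (f.map (algebraMap ℝ ℂ)).roots, ∀ l : ℝ, 0 < l → l ≤ 2 * Real.pi * t →
      Complex.exp (l * Complex.I) ≠ ξ) : argCount t f = 0 := by
  refine Multiset.sum_eq_zero fun n hn => ?_
  obtain ⟨ξ, hξ, rfl⟩ := Multiset.mem_map.mp hn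
  exact Nat.card_eq_zero.mpr (Or.inl ⟨fun ⟨l, hl, hlt, hlξ⟩ => h ξ hξ l hl hlt hlξ⟩)

lemma argCount_eq_zero_of_roots_pow_eq_one {t : ℝ} {f : Polynomial ℝ} {k : ℕ} (hk : k ≠ 0)
    (hkt : k * t < 1) (h : ∀ ξ ∈ (f.map (algebraMap ℝ ℂ)).roots, ξ ^ k = 1) :
    argCount t f = 0 := by
  refine argCount_eq_zero fun ξ hξ l hl hlt hlξ => exp_mul_I_pow_ne_one hk hl ?_ (hlξ ▸ h ξ hξ)
  nlinarith [Real.pi_pos, mul_le_mul_of_nonneg_left hlt k.cast_nonneg]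

lemma piFn_mul (κ d : ℕ) {f g : Polynomial ℝ} (hf : f ≠ 0) (hg : g ≠ 0) :
    piFn κ d (f * g) = piFn κ d f + piFn κ d g := by
  have hmap : ∀ p : Polynomial ℝ, p ≠ 0 → p.map (algebraMap ℝ ℂ) ≠ 0 := fun p hp =>
    (Polynomial.map_ne_zero_iff (algebraMap ℝ ℂ).injective).mpr hp
  unfold piFn argCount
  rw [Polynomial.map_mul, roots_mul (mul_ne_zero (hmap f hf) (hmap g hg)), Multiset.map_add,
    Multiset.sum_add, rootMultiplicity_mul (mul_ne_zero hf hg),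
    rootMultiplicity_mul (mul_ne_zero hf hg), natDegree_mul hf hg]
  push_cast
  ring

lemma piFn_C (κ d : ℕ) (r : ℝ) : piFn κ d (C r) = 0 := by
  simp [piFn, argCount, rootMultiplicity_C]

lemma piFn_neg (κ d : ℕ) (f : Polynomial ℝ) : piFn κ d (-f) = piFn κ d f := by
  rcases eq_or_ne f 0 with rfl | hf
  · rw [neg_zero]
  · rw [← neg_one_mul, ← C_1, ← C_neg, piFn_mul κ d (by simp) hf, piFn_C, zero_add]

lemma piFn_prod {ι : Type*} (κ d : ℕ) (s : Finset ι) (f : ι → Polynomial ℝ)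
    (h : ∀ i ∈ s, f i ≠ 0) : piFn κ d (∏ i ∈ s, f i) = ∑ i ∈ s, piFn κ d (f i) := by
  induction s using Finset.cons_induction with
  | empty => simpa using piFn_C κ d 1
  | cons a s ha ih =>
    rw [Finset.forall_mem_cons] at h
    rw [Finset.prod_cons, Finset.sum_cons, piFn_mul κ d h.1 (Finset.prod_ne_zero_iff.mpr h.2),
      ih h.2]

lemma piFn_X_pow (κ d n : ℕ) : piFn κ d ((X : Polynomial ℝ) ^ n) = 2 * n * κ / d := by
  have h0 : rootMultiplicity 0 ((X : Polynomial ℝ) ^ n) = n := by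
    simpa using rootMultiplicity_X_sub_C_pow (0 : ℝ) n
  have h1 : rootMultiplicity 1 ((X : Polynomial ℝ) ^ n) = 0 := rootMultiplicity_eq_zero (by simp)
  have harg : argCount (κ / d) ((X : Polynomial ℝ) ^ n) = 0 := by
    refine argCount_eq_zero fun ξ hξ l _ _ hlξ => ?_
    obtain ⟨hξ0, -⟩ : ξ = 0 ∧ n ≠ 0 := by simpa using isRoot_of_mem_roots hξ
    exact Complex.exp_ne_zero _ (hlξ.trans hξ0)
  rw [piFn, h0, h1, harg, natDegree_X_pow]
  push_cast
  ring

lemma piFn_X_pow_sub_one {κ d k : ℕ} (hk : k ≠ 0) (hkd : k * κ < d) :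
    piFn κ d ((X : Polynomial ℝ) ^ k - 1) = k * κ / d + 1 / 2 := by
  have hsep : ((X : Polynomial ℝ) ^ k - 1).Separable := by
    simpa using separable_X_pow_sub_C (1 : ℝ) (by exact_mod_cast hk) one_ne_zero
  have h0 : rootMultiplicity 0 ((X : Polynomial ℝ) ^ k - 1) = 0 :=
    rootMultiplicity_eq_zero (by simp [zero_pow hk])
  have h1 : rootMultiplicity 1 ((X : Polynomial ℝ) ^ k - 1) = 1 :=
    le_antisymm (rootMultiplicity_le_one_of_separable hsep 1)
      ((rootMultiplicity_pos hsep.ne_zero).mpr (by simp))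
  have harg : argCount (κ / d) ((X : Polynomial ℝ) ^ k - 1) = 0 := by
    refine argCount_eq_zero_of_roots_pow_eq_one hk ?_ fun ξ hξ => ?_
    · rw [← mul_div_assoc, div_lt_one (by exact_mod_cast hkd.pos)]
      exact_mod_cast hkd
    · simpa [sub_eq_zero] using isRoot_of_mem_roots hξ
  have hdeg : ((X : Polynomial ℝ) ^ k - 1).natDegree = k := by
    simpa using natDegree_X_pow_sub_C (n := k) (r := (1 : ℝ))
  rw [piFn, h0, h1, harg, hdeg]
  push_cast
  ring

lemma piFn_X_pow_add_one {κ d k : ℕ} (hkd : 2 * k * κ < d) :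
    piFn κ d ((X : Polynomial ℝ) ^ k + 1) = k * κ / d := by
  rcases eq_or_ne k 0 with rfl | hk
  · rw [pow_zero, one_add_one_eq_two, ← C_ofNat, piFn_C]
    simp
  have h0 : rootMultiplicity 0 ((X : Polynomial ℝ) ^ k + 1) = 0 :=
    rootMultiplicity_eq_zero (by simp [zero_pow hk])
  have h1 : rootMultiplicity 1 ((X : Polynomial ℝ) ^ k + 1) = 0 :=
    rootMultiplicity_eq_zero (by norm_num)
  have harg : argCount (κ / d) ((X : Polynomial ℝ) ^ k + 1) = 0 := by
    refine argCount_eq_zero_of_roots_pow_eq_one (k := 2 * k) (by omega) ?_ fun ξ hξ => ?_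
    · rw [← mul_div_assoc, div_lt_one (by exact_mod_cast hkd.pos)]
      exact_mod_cast hkd
    · have hξk : ξ ^ k = -1 := by
        simpa [add_eq_zero_iff_eq_neg] using isRoot_of_mem_roots hξ
      rw [mul_comm, pow_mul, hξk, neg_one_sq]
  have hdeg : ((X : Polynomial ℝ) ^ k + 1).natDegree = k := by
    simpa using natDegree_X_pow_add_C (n := k) (r := (1 : ℝ))
  rw [piFn, h0, h1, harg, hdeg]
  push_cast
  ring

lemma X_pow_sub_X_pow_ne_zero {R : Type*} [Ring R] [Nontrivial R] {a b : ℕ} (hab : a ≠ b) :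
    (X : Polynomial R) ^ a - X ^ b ≠ 0 := fun h =>
  hab (by simpa using congrArg natDegree (sub_eq_zero.mp h))

lemma X_pow_add_X_pow_ne_zero {R : Type*} [CommSemiring R] [CharZero R] (a b : ℕ) :
    (X : Polynomial R) ^ a + X ^ b ≠ 0 := fun h => by
  simpa [one_add_one_eq_two] using congrArg (eval 1) h

lemma piFn_X_pow_sub_X_pow {κ d a b : ℕ} (hab : a ≠ b) (h : |(a : ℤ) - b| * κ < d) :
    piFn κ d ((X : Polynomial ℝ) ^ a - X ^ b) = (a + b) * κ / d + 1 / 2 := by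
  wlog hba : b < a generalizing a b
  · rw [← neg_sub, piFn_neg, this hab.symm (by rwa [abs_sub_comm]) (by omega), add_comm (a : ℚ)]
  obtain ⟨k, rfl⟩ : ∃ k, a = b + k := ⟨a - b, by omega⟩
  have hk : k ≠ 0 := by omega
  have hkd : k * κ < d := by zify; simpa using h
  rw [show (X : Polynomial ℝ) ^ (b + k) - X ^ b = X ^ b * (X ^ k - 1) by ring,
    piFn_mul κ d (pow_ne_zero b X_ne_zero) (by simpa using X_pow_sub_X_pow_ne_zero hk),
    piFn_X_pow, piFn_X_pow_sub_one hk hkd]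
  push_cast
  ring

lemma piFn_X_pow_add_X_pow {κ d a b : ℕ} (h : 2 * |(a : ℤ) - b| * κ < d) :
    piFn κ d ((X : Polynomial ℝ) ^ a + X ^ b) = (a + b) * κ / d := by
  wlog hba : b ≤ a generalizing a b
  · rw [add_comm, this (by rwa [abs_sub_comm]) (by omega), add_comm (a : ℚ)]
  obtain ⟨k, rfl⟩ : ∃ k, a = b + k := ⟨a - b, by omega⟩
  have hkd : 2 * k * κ < d := by zify; simpa using h
  rw [show (X : Polynomial ℝ) ^ (b + k) + X ^ b = X ^ b * (X ^ k + 1) by ring,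
    piFn_mul κ d (pow_ne_zero b X_ne_zero) (by simpa using X_pow_add_X_pow_ne_zero (R := ℝ) k 0),
    piFn_X_pow, piFn_X_pow_add_one hkd]
  push_cast
  ring

lemma piFn_X_pow_mul_prod_sub {ι : Type*} [DecidableEq ι] {κ d : ℕ} {S : Finset ι} {m : ι}
    (hm : m ∈ S) (P : ι → Prop) [DecidablePred P] (c : ι → ℕ) (u : ι → Polynomial ℝ)
    (hne : ∀ j ∈ S.erase m, u m - u j ≠ 0)
    (hfac : ∀ j ∈ S.erase m, piFn κ d (u m - u j) =
      (c m + c j) * κ / d + if (P j ↔ P m) then 1 / 2 else 0) :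
    piFn κ d (X ^ c m * ∏ j ∈ S.erase m, (u m - u j)) =
      (#S * c m + ∑ j ∈ S, c j) * κ / d + (#{j ∈ S | P j ↔ P m} - 1) / 2 := by
  rw [piFn_mul κ d (pow_ne_zero _ X_ne_zero) (Finset.prod_ne_zero_iff.mpr hne), piFn_X_pow,
    piFn_prod κ d _ _ hne, Finset.sum_congr rfl hfac, Finset.sum_erase_eq_sub hm,
    Finset.sum_add_distrib, Finset.sum_ite, Finset.sum_const, Finset.sum_const_zero,
    ← Finset.sum_div, ← Finset.sum_mul, Finset.sum_add_distrib, Finset.sum_const, if_pos Iff.rfl]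
  simp only [nsmul_eq_mul]
  push_cast
  ring

lemma card_filter_le_iff_le_Icc (s t m : ℕ) :
    #{j ∈ Icc 1 (s + t) | j ≤ s ↔ m ≤ s} = if m ≤ s then s else t := by
  split_ifs with hms
  · rw [show {j ∈ Icc 1 (s + t) | j ≤ s ↔ m ≤ s} = Icc 1 s by
      ext j; simp only [mem_filter, mem_Icc, hms, iff_true]; omega]
    simp
  · rw [show {j ∈ Icc 1 (s + t) | j ≤ s ↔ m ≤ s} = Icc (s + 1) (s + t) by
      ext j; simp only [mem_filter, mem_Icc, hms, iff_false]; omega]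
    simp

lemma two_mul_coxeterExponent {d ε s t : ℕ} {c : ℕ → ℕ}
    (hc : ∀ m, c m = if m ≤ s then ε * (s - m) else d / 2 - ε * (m - s))
    (heven : Even d) (hde : ε * (s + t) = d) (hts : t ≤ s) {m : ℕ} (hm : m ≤ s + t) :
    2 * (c m : ℤ) = 2 * ε * (s - m) + if m ≤ s then 0 else (d : ℤ) := by
  obtain ⟨r, rfl⟩ := heven
  rw [hc]
  split_ifs with hms
  · push_cast [hms]
    ring
  · have hεm : ε * (m - s) ≤ ε * t := Nat.mul_le_mul_left ε (by omega)
    have hεt : ε * t ≤ r := by nlinarith [Nat.mul_le_mul_left ε hts]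
    rw [show (r + r) / 2 = r by omega]
    push_cast [hεm.trans hεt, (by omega : s ≤ m)]
    ring

section CoxeterExponent

variable {d ε s t : ℕ} {c : ℕ → ℕ} {i j : ℕ}

lemma coxeterExponent_sub_of_same_side (hε : 0 < ε) (hde : ε * (s + t) = d)
    (h2c : ∀ m ≤ s + t, 2 * (c m : ℤ) = 2 * ε * (s - m) + if m ≤ s then 0 else (d : ℤ))
    (hi : i ∈ Icc 1 (s + t)) (hj : j ∈ Icc 1 (s + t)) (hji : j ≠ i) (h : i ≤ s ↔ j ≤ s) :
    c i ≠ c j ∧ |(c i : ℤ) - c j| < d := by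
  rw [mem_Icc] at hi hj
  have hc : (c i : ℤ) - c j = ε * (j - i) := by
    have hci := h2c i hi.2
    simp only [h] at hci
    linarith [h2c j hj.2]
  have hε' : (0 : ℤ) < ε := by exact_mod_cast hε
  refine ⟨fun hcij => ?_, ?_⟩
  · rw [hcij, sub_self, eq_comm, mul_eq_zero] at hc
    omega
  · rw [hc, abs_mul, abs_of_pos hε', ← hde]
    push_cast
    exact mul_lt_mul_of_pos_left (abs_lt.mpr ⟨by omega, by omega⟩) hε'

lemma coxeterExponent_sub_of_opposite_side (hε : 0 < ε) (hde : ε * (s + t) = d)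
    (h2c : ∀ m ≤ s + t, 2 * (c m : ℤ) = 2 * ε * (s - m) + if m ≤ s then 0 else (d : ℤ))
    (hi : i ∈ Icc 1 (s + t)) (hj : j ∈ Icc 1 (s + t)) (h : ¬(i ≤ s ↔ j ≤ s)) :
    2 * |(c i : ℤ) - c j| < d := by
  wlog his : i ≤ s generalizing i j
  · rw [abs_sub_comm]
    exact this hj hi (by tauto) (by tauto)
  have hjs : ¬j ≤ s := fun hjs => h (iff_of_true his hjs)
  rw [mem_Icc] at hi hj
  have hci := h2c i hi.2
  have hcj := h2c j hj.2
  simp only [his, hjs, if_true, if_false] at hci hcj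
  have hpos : 0 < (ε : ℤ) * (j - i) := mul_pos (by exact_mod_cast hε) (by omega)
  have hlt : (ε : ℤ) * (j - i) < d := by
    rw [← hde]
    push_cast
    exact mul_lt_mul_of_pos_left (by omega) (by exact_mod_cast hε)
  rcases abs_cases ((c i : ℤ) - c j) with ⟨habs, -⟩ | ⟨habs, -⟩ <;> rw [habs] <;> linarith

lemma coxeterParam_sub_ne_zero_and_piFn_eq {u : ℕ → Polynomial ℝ} (hε : 0 < ε)
    (hde : ε * (s + t) = d)
    (h2c : ∀ m ≤ s + t, 2 * (c m : ℤ) = 2 * ε * (s - m) + if m ≤ s then 0 else (d : ℤ))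
    (hu : ∀ m, u m = if m ≤ s then X ^ c m else -X ^ c m)
    (hi : i ∈ Icc 1 (s + t)) (hj : j ∈ Icc 1 (s + t)) (hji : j ≠ i) :
    u i - u j ≠ 0 ∧
      piFn 1 d (u i - u j) = (c i + c j) * (1 : ℕ) / d + if (j ≤ s ↔ i ≤ s) then 1 / 2 else 0 := by
  have hsame (h) := coxeterExponent_sub_of_same_side hε hde h2c hi hj hji h
  have hopp (h) := coxeterExponent_sub_of_opposite_side hε hde h2c hi hj h
  rw [hu i, hu j]
  by_cases his : i ≤ s <;> by_cases hjs : j ≤ s <;>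
    simp only [his, hjs, if_true, if_false, iff_true, iff_false, not_true_eq_false]
  · obtain ⟨hne, hlt⟩ := hsame (iff_of_true his hjs)
    exact ⟨X_pow_sub_X_pow_ne_zero hne, piFn_X_pow_sub_X_pow hne (by simpa using hlt)⟩
  · rw [sub_neg_eq_add, add_zero]
    exact ⟨X_pow_add_X_pow_ne_zero _ _,
      piFn_X_pow_add_X_pow (by simpa using hopp (by simp [his, hjs]))⟩
  · rw [← neg_add', neg_ne_zero, piFn_neg, add_zero]
    exact ⟨X_pow_add_X_pow_ne_zero _ _,
      piFn_X_pow_add_X_pow (by simpa using hopp (by simp [his, hjs]))⟩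
  · obtain ⟨hne, hlt⟩ := hsame (iff_of_false his hjs)
    rw [neg_sub_neg, ← neg_sub, neg_ne_zero, piFn_neg]
    exact ⟨X_pow_sub_X_pow_ne_zero hne, piFn_X_pow_sub_X_pow hne (by simpa using hlt)⟩

lemma piFn_coxeterRelDeg {u V : ℕ → Polynomial ℝ} (hε : 0 < ε) (hde : ε * (s + t) = d)
    (h2c : ∀ m ≤ s + t, 2 * (c m : ℤ) = 2 * ε * (s - m) + if m ≤ s then 0 else (d : ℤ))
    (hu : ∀ m, u m = if m ≤ s then X ^ c m else -X ^ c m)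
    (hV : ∀ m, V m = X ^ c m * ∏ j ∈ (Icc 1 (s + t)).erase m, (u m - u j))
    {m : ℕ} (hm : m ∈ Icc 1 (s + t)) :
    piFn 1 d (V m) =
      ((s + t) * c m + ∑ j ∈ Icc 1 (s + t), c j) / d + ((if m ≤ s then s else t) - 1) / 2 := by
  have hfac (j) (hj : j ∈ (Icc 1 (s + t)).erase m) :=
    coxeterParam_sub_ne_zero_and_piFn_eq hε hde h2c hu hm (mem_of_mem_erase hj)
      (ne_of_mem_erase hj)
  rw [hV, piFn_X_pow_mul_prod_sub hm (· ≤ s) c u (fun j hj => (hfac j hj).1)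
    (fun j hj => (hfac j hj).2), card_filter_le_iff_le_Icc, Nat.card_Icc, Nat.add_sub_cancel]
  push_cast
  ring

end CoxeterExponent

theorem piFn_coxeter_hecke_general (d e ε s t : ℕ) (hd : 2 ≤ d) (heven : Even d)
    (hdvd : e ∣ d) (hε : ε = d / e) (hs : 1 ≤ s) (hts : t ≤ s) (hst : s + t = e)
    (c : ℕ → ℕ) (hc : ∀ m, c m = if m ≤ s then ε * (s - m) else d / 2 - ε * (m - s))
    (u : ℕ → Polynomial ℝ) (hu : ∀ m, u m = if m ≤ s then X ^ c m else -X ^ c m)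
    (V : ℕ → Polynomial ℝ)
    (hV : ∀ m, V m = X ^ c m * ∏ j ∈ (Finset.Icc 1 e).erase m, (u m - u j)) :
    (∀ m, 1 ≤ m → m ≤ s → piFn 1 d (V 1) - piFn 1 d (V m) = (m : ℚ) - 1) ∧
    (∀ m, 1 ≤ m → m ≤ t →
      piFn 1 d (V 1) - piFn 1 d (V (s + m)) = (s : ℚ) - (t : ℚ) - 1 + (m : ℚ)) := by
  subst hst
  have hde : ε * (s + t) = d := by rw [hε, Nat.div_mul_cancel hdvd]
  have hε0 : 0 < ε := Nat.pos_of_ne_zero (by rintro rfl; omega)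
  have h2c (m) (hm : m ≤ s + t) := two_mul_coxeterExponent hc heven hde hts hm
  have hVm (m) (hm : m ∈ Icc 1 (s + t)) := piFn_coxeterRelDeg hε0 hde h2c hu hV hm
  have h2cq (m) (hm : m ≤ s + t) :
      2 * (c m : ℚ) = 2 * ε * (s - m) + if m ≤ s then 0 else (d : ℚ) := by
    exact_mod_cast h2c m hm
  have hdq : (d : ℚ) = ε * (s + t) := by exact_mod_cast hde.symm
  have h1 := h2cq 1 (by omega)
  rw [if_pos hs] at h1
  refine ⟨fun m hm1 hms => ?_, fun m hm1 hmt => ?_⟩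
  · rw [hVm 1 (mem_Icc.mpr ⟨le_rfl, by omega⟩), hVm m (mem_Icc.mpr ⟨hm1, by omega⟩),
      if_pos hs, if_pos hms]
    have hm := h2cq m (by omega)
    rw [if_pos hms] at hm
    field_simp
    linear_combination (↑s + ↑t) * (h1 - hm) - 2 * (↑m - 1) * hdq
  · rw [hVm 1 (mem_Icc.mpr ⟨le_rfl, by omega⟩), hVm (s + m) (mem_Icc.mpr ⟨by omega, by omega⟩),
      if_pos hs, if_neg (by omega)]
    have hm := h2cq (s + m) (by omega)
    rw [if_neg (by omega)] at hm
    push_cast at hm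
    field_simp
    linear_combination (↑s + ↑t) * (h1 - hm) - 2 * (↑s - 1 + ↑m) * hdq

/-- Proposition 12.2: for the Coxeter Hecke algebra of type `(s,t)` and ambiance `d` (with `d`
even, `e = s + t` dividing `d`, `ε = d/e`, `s ≥ t`, `s ≥ 1`), with parameters
`u_m = q^{ε(s−m)}` for `1 ≤ m ≤ s` and `u_{s+m} = −q^{d/2 − εm}` for `1 ≤ m ≤ t`, and
`V_m = q^{c_m}·∏_{j≠m}(u_m − u_j)` where `c_m` is the exponent of `u_m`:
`π_{1/d}(V_1) − π_{1/d}(V_m) = m − 1` for `1 ≤ m ≤ s` and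
`π_{1/d}(V_1) − π_{1/d}(V_{s+m}) = s − t − 1 + m` for `1 ≤ m ≤ t`; that is, the `π_{1/d}`-values
of the relative degrees form the canonical perversity function. -/
theorem piFn_coxeter_hecke (d e ε s t : ℕ) (hd : 2 ≤ d) (heven : Even d) (he : 1 ≤ e)
    (hdvd : e ∣ d) (hε : ε = d / e) (hs : 1 ≤ s) (hts : t ≤ s) (hst : s + t = e)
    (c : ℕ → ℕ) (hc : ∀ m, c m = if m ≤ s then ε * (s - m) else d / 2 - ε * (m - s))
    (u : ℕ → Polynomial ℝ) (hu : ∀ m, u m = if m ≤ s then X ^ c m else -X ^ c m)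
    (V : ℕ → Polynomial ℝ)
    (hV : ∀ m, V m = X ^ c m * ∏ j ∈ (Finset.Icc 1 e).erase m, (u m - u j)) :
    (∀ m, 1 ≤ m → m ≤ s → piFn 1 d (V 1) - piFn 1 d (V m) = (m : ℚ) - 1) ∧
    (∀ m, 1 ≤ m → m ≤ t →
      piFn 1 d (V 1) - piFn 1 d (V (s + m)) = (s : ℚ) - (t : ℚ) - 1 + (m : ℚ)) :=
  piFn_coxeter_hecke_general d e ε s t hd heven hdvd hε hs hts hst c hc u hu V hV
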